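/- For a quadratic monomial algebra A = kQ/I, the simple module S_x admits a projective resolution ⋯ → P^{-ℓ} → ⋯ → P^0 → S_x → 0 where P^{-ℓ} = ⊕_{p ∈ Γ^ℓ(x,-)} e_{t(p)}A and the differential sends the generator e_{t(β₁⋯β_ℓ)} indexed by β₁⋯β_ℓ to β_ℓ in the summand indexed by β₁⋯β_{ℓ-1}; this is indeed a complex (d ∘ d = 0) and it is exact in positive degrees. -/

import Mathlib

open scoped Classical

/-- A finite-type-free presentation of a quiver: vertices, arrows, source and target. -/
structure Quiv where
  V : Type
  E : Type
  s : E → V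
  t : E → V

namespace Quiv

variable (Q : Quiv)

/-- A (composable) path, given as the list of its arrows. -/
def IsPath (l : List Q.E) : Prop := l.Chain' (fun a b => Q.t a = Q.s b)

/-- A Γ-path for the set of monomial quadratic relations `R`:
a composable sequence of arrows each consecutive pair of which lies in `R`. -/
def GammaPath (R : Set (List Q.E)) (l : List Q.E) : Prop :=
  l.Chain' (fun a b => Q.t a = Q.s b ∧ [a, b] ∈ R)

/-- The list of arrows `l` starts at the vertex `x`. -/
def StartsAt (x : Q.V) (l : List Q.E) : Prop := ∀ h : l ≠ [], Q.s (l.head h) = x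

/-- The list of arrows `l` ends at the vertex `y`. -/
def EndsAt (y : Q.V) (l : List Q.E) : Prop := ∀ h : l ≠ [], Q.t (l.getLast h) = y

/-- `l` is a path from `x` to `y` (a stationary path when `l = []`). -/
def FromTo (x y : Q.V) (l : List Q.E) : Prop :=
  IsPath Q l ∧ StartsAt Q x l ∧ EndsAt Q y l ∧ (l = [] → x = y)

/-- An allowed path: a composable path no consecutive pair of which lies in the
set of quadratic monomial relations `R`; these are exactly the paths which are
nonzero in the quadratic monomial algebra `kQ/⟨R⟩`. -/
def Allowed (R : Set (List Q.E)) (l : List Q.E) : Prop :=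
  l.Chain' (fun a b => Q.t a = Q.s b ∧ [a, b] ∉ R)

/-- The composition `u ∘_{s,r} v = α₁⋯α_{s-1} β₁⋯βₘ α_r⋯αₙ` of the paths
`u = α₁⋯αₙ` and `v = β₁⋯βₘ` at the (1-indexed) positions `s ≤ r`. -/
def compSR (u v : List Q.E) (s r : ℕ) : List Q.E := u.take (s - 1) ++ v ++ u.drop (r - 1)

/-- The composition `u ∘_s v` at position `s`, i.e. `u ∘_{s,s+1} v`: replace the `s`-th
arrow of `u` by the path `v`. -/
def compS (u v : List Q.E) (s : ℕ) : List Q.E := u.take (s - 1) ++ v ++ u.drop s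

/-- `(u,v)` is an `(s,r)` Γ-bypass. -/
def IsBypassSR (R : Set (List Q.E)) (u v : List Q.E) (s r : ℕ) : Prop :=
  1 ≤ s ∧ s ≤ r ∧ r ≤ u.length ∧ GammaPath Q R (compSR Q u v s r)

/-- `(u,v)` is an `(s,s+1)` Γ-bypass. -/
def IsBypass (R : Set (List Q.E)) (u v : List Q.E) (s : ℕ) : Prop :=
  1 ≤ s ∧ s ≤ u.length ∧ GammaPath Q R (compS Q u v s)

end Quiv
namespace Quiv

/-- A presentation of the quadratic monomial algebra `A = kQ/⟨R⟩`: the images `e v` of the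
stationary paths (a complete family of orthogonal idempotents) and the images `ι a` of the
arrows, satisfying the quiver compatibilities and killing the monomial relations of `R`. -/
structure MonPres (Q : Quiv) (R : Set (List Q.E)) (k A : Type)
    [Field k] [Ring A] [Algebra k A] where
  e : Q.V → A
  ι : Q.E → A
  idem : ∀ v, e v * e v = e v
  orth : ∀ v w, v ≠ w → e v * e w = 0
  src : ∀ a, e (Q.s a) * ι a = ι a
  tgt : ∀ a, ι a * e (Q.t a) = ι a
  rel : ∀ l ∈ R, (l.map ι).prod = 0

variable {Q : Quiv} {R : Set (List Q.E)} {k A : Type} [Field k] [Ring A] [Algebra k A]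

/-- The image in `A` of a path given by its list of arrows. -/
def MonPres.pathProd (P : MonPres Q R k A) (l : List Q.E) : A := (l.map P.ι).prod

/-- The image in `A` of a path starting at a given vertex (so the image of a stationary
path at `v` is the idempotent `e v`). -/
def MonPres.pathVal (P : MonPres Q R k A) (z : Q.V × List Q.E) : A :=
  P.e z.1 * P.pathProd z.2

/-- The (classes of the) nonzero paths form a `k`-basis of `A`: this characterizes the
quadratic monomial algebra `kQ/⟨R⟩` among the algebras with a presentation as above. -/
def MonPres.HasPathBasis (P : MonPres Q R k A) : Prop :=
  ∃ b : Module.Basis {z : Q.V × List Q.E // Q.Allowed R z.2 ∧ Q.StartsAt z.1 z.2} k A,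
    ∀ z, b z = P.pathVal z.1

end Quiv

namespace Quiv

variable {Q : Quiv} {R : Set (List Q.E)} {k A : Type} [Field k] [Ring A] [Algebra k A]

/-- The endpoint of the path `l` starting at `x` (which is `x` itself if `l = []`). -/
def endV (Q : Quiv) (x : Q.V) (l : List Q.E) : Q.V := l.foldl (fun _ a => Q.t a) x

/-- The differential of the minimal projective resolution
`⋯ → ⊕_{p ∈ Γ^ℓ(x,-)} e_{t(p)}A → ⊕_{p ∈ Γ^{ℓ-1}(x,-)} e_{t(p)}A → ⋯` of a simple module
over a quadratic monomial algebra, all graded pieces being gathered into the module of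
finitely supported families indexed by Γ-paths: the generator indexed by `β₁⋯β_ℓ` is sent
to `β_ℓ` in the summand indexed by `β₁⋯β_{ℓ-1}`. -/
noncomputable def MonPres.simpleResD (P : MonPres Q R k A) :
    ({l : List Q.E // Q.GammaPath R l} →₀ A) →ₗ[k]
      ({l : List Q.E // Q.GammaPath R l} →₀ A) :=
  Finsupp.lsum k fun z =>
    if h : z.1 = [] then 0
    else
      (Finsupp.lsingle
          ⟨z.1.dropLast, List.IsChain.prefix z.2 z.1.dropLast_prefix⟩).comp
        (LinearMap.mulLeft k (P.ι (z.1.getLast h)))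

/-- The element `f` is supported in the degree-`n` part of the resolution of the simple
module `S_x`: every index in its support is a Γ-path of length `n` starting at `x`, and
the corresponding coefficient lies in the right ideal `e_{t(p)}A`. -/
def MonPres.InDegree (P : MonPres Q R k A) (x : Q.V) (n : ℕ)
    (f : {l : List Q.E // Q.GammaPath R l} →₀ A) : Prop :=
  ∀ z ∈ f.support, z.1.length = n ∧ Q.StartsAt x z.1 ∧
    P.e (endV Q x z.1) * f z = f z

/-! ### Auxiliary definitions and lemmas for the proof -/

abbrev SigT (Q : Quiv) (R : Set (List Q.E)) : Type :=
  {z : Q.V × List Q.E // Q.Allowed R z.2 ∧ Q.StartsAt z.1 z.2}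

abbrev GamT (Q : Quiv) (R : Set (List Q.E)) : Type :=
  {l : List Q.E // Q.GammaPath R l}

section Helpers

variable (P : MonPres Q R k A)

lemma pathProd_cons (a : Q.E) (l : List Q.E) :
    P.pathProd (a :: l) = P.ι a * P.pathProd l := by
  simp [MonPres.pathProd]

lemma iota_mul_iota {a b : Q.E} (h : [a, b] ∈ R) : P.ι a * P.ι b = 0 := by
  have := P.rel _ h
  simpa [MonPres.pathProd] using this

lemma getLast_concat'' {α : Type*} (l : List α) (a : α) (h : l ++ [a] ≠ []) :
    (l ++ [a]).getLast h = a := by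
  simp [List.getLast_append]

lemma gamma_pair {l : List Q.E} (hl : Q.GammaPath R l) (h1 : l ≠ []) (h2 : l.dropLast ≠ []) :
    [l.dropLast.getLast h2, l.getLast h1] ∈ R := by
  have hl' : List.Chain' (fun a b => Q.t a = Q.s b ∧ [a, b] ∈ R)
      (l.dropLast ++ [l.getLast h1]) := by
    rw [List.dropLast_append_getLast h1]; exact hl
  have h4 := (List.isChain_append.mp hl').2.2
  exact (h4 _ (List.getLast?_eq_getLast h2) _ rfl).2

lemma simpleResD_single (z : GamT Q R) (a : A) :
    P.simpleResD (Finsupp.single z a) =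
      if h : z.1 = [] then 0
      else Finsupp.single ⟨z.1.dropLast, List.IsChain.prefix z.2 z.1.dropLast_prefix⟩
        (P.ι (z.1.getLast h) * a) := by
  rw [MonPres.simpleResD, Finsupp.lsum_single]
  by_cases h : z.1 = []
  · rw [dif_pos h, dif_pos h]; rfl
  · rw [dif_neg h, dif_neg h, LinearMap.comp_apply, LinearMap.mulLeft_apply,
      Finsupp.lsingle_apply]

lemma simpleResD_apply (f : GamT Q R →₀ A) :
    P.simpleResD f = f.sum fun z a =>
      if h : z.1 = [] then 0
      else Finsupp.single ⟨z.1.dropLast, List.IsChain.prefix z.2 z.1.dropLast_prefix⟩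
        (P.ι (z.1.getLast h) * a) := by
  rw [MonPres.simpleResD, Finsupp.lsum_apply]
  refine Finsupp.sum_congr fun z _ => ?_
  by_cases h : z.1 = []
  · rw [dif_pos h, dif_pos h]; rfl
  · rw [dif_neg h, dif_neg h, LinearMap.comp_apply, LinearMap.mulLeft_apply,
      Finsupp.lsingle_apply]

lemma simpleResD_comp_self : P.simpleResD.comp P.simpleResD = 0 := by
  apply Finsupp.lhom_ext
  intro z a
  rw [LinearMap.comp_apply, LinearMap.zero_apply, simpleResD_single]
  by_cases h : z.1 = []
  · rw [dif_pos h, map_zero]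
  · rw [dif_neg h, simpleResD_single]
    by_cases h2 : z.1.dropLast = []
    · rw [dif_pos h2]
    · rw [dif_neg h2, ← mul_assoc, iota_mul_iota P (gamma_pair z.2 h h2), zero_mul,
        Finsupp.single_zero]

lemma e_mul_pathVal (v : Q.V) (z : Q.V × List Q.E) :
    P.e v * P.pathVal z = if v = z.1 then P.pathVal z else 0 := by
  simp only [MonPres.pathVal]
  rw [← mul_assoc]
  split_ifs with h
  · rw [h, P.idem]
  · rw [P.orth _ _ h, zero_mul]

lemma iota_mul_e_ne (β : Q.E) {v : Q.V} (h : v ≠ Q.t β) : P.ι β * P.e v = 0 := by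
  rw [← P.tgt β, mul_assoc, P.orth _ _ (fun hh => h hh.symm), mul_zero]

lemma iota_mul_pathVal_of_ne (β : Q.E) {z : Q.V × List Q.E} (h : z.1 ≠ Q.t β) :
    P.ι β * P.pathVal z = 0 := by
  simp only [MonPres.pathVal]
  rw [← mul_assoc, iota_mul_e_ne P β h, zero_mul]

lemma iota_mul_pathVal_rel (β : Q.E) (w : List Q.E) (hw : w ≠ []) (hr : [β, w.head hw] ∈ R) :
    P.ι β * P.pathVal (Q.t β, w) = 0 := by
  simp only [MonPres.pathVal]
  rw [← mul_assoc, P.tgt]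
  conv_lhs => rw [← List.cons_head_tail hw]
  rw [pathProd_cons, ← mul_assoc, iota_mul_iota P hr, zero_mul]

lemma iota_mul_pathVal_good (β : Q.E) (w : List Q.E) :
    P.ι β * P.pathVal (Q.t β, w) = P.pathVal (Q.s β, β :: w) := by
  simp only [MonPres.pathVal, pathProd_cons]
  rw [← mul_assoc, P.tgt, ← mul_assoc, P.src]

lemma allowed_cons (β : Q.E) (w : List Q.E) (hall : Q.Allowed R w)
    (hst : Q.StartsAt (Q.t β) w)
    (hgood : ∀ hw : w ≠ [], [β, w.head hw] ∉ R) :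
    Q.Allowed R (β :: w) ∧ Q.StartsAt (Q.s β) (β :: w) := by
  constructor
  · refine List.isChain_cons.mpr ⟨?_, hall⟩
    intro y hy
    cases w with
    | nil => simp at hy
    | cons γ t =>
      obtain rfl : y = γ := by simpa using hy.symm
      exact ⟨(hst (by simp)).symm, hgood (by simp)⟩
  · intro h; rfl

lemma startsAt_tail {w : List Q.E} (hall : Q.Allowed R w) (hw : w ≠ []) :
    Q.StartsAt (Q.t (w.head hw)) w.tail := by
  intro ht
  have h' : List.Chain' (fun a b => Q.t a = Q.s b ∧ [a, b] ∉ R) (w.head hw :: w.tail) := by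
    rw [List.cons_head_tail]; exact hall
  have := (List.isChain_cons.mp h').1 (w.tail.head ht) (by simp [List.head?_eq_head ht])
  exact this.1.symm

lemma iota_head_mul_pathVal (z : SigT Q R) (hw : z.1.2 ≠ []) :
    P.ι (z.1.2.head hw) * P.pathVal (Q.t (z.1.2.head hw), z.1.2.tail) = P.pathVal z.1 := by
  obtain ⟨⟨v, w⟩, hall, hst⟩ := z
  simp only [MonPres.pathVal]
  rw [← mul_assoc, P.tgt]
  have hv : Q.s (w.head hw) = v := hst hw
  conv_rhs => rw [← List.cons_head_tail (l := w) hw, pathProd_cons, ← mul_assoc]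
  rw [← hv, P.src]

lemma endV_concat (x : Q.V) (l : List Q.E) (a : Q.E) : endV Q x (l ++ [a]) = Q.t a := by
  simp [endV, List.foldl_append]

lemma endV_ne (x : Q.V) {l : List Q.E} (h : l ≠ []) :
    endV Q x l = Q.t (l.getLast h) := by
  conv_lhs => rw [← List.dropLast_append_getLast h]
  rw [endV_concat]

end Helpers
section BasisHelpers

variable (P : MonPres Q R k A)
variable (b : Module.Basis (SigT Q R) k A) (hb : ∀ z, b z = P.pathVal z.1)

include hb

lemma expansion (a : A) : a = (b.repr a).sum fun z c => c • P.pathVal z.1 := by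
  conv_lhs => rw [← b.linearCombination_repr a]
  rw [Finsupp.linearCombination_apply]
  exact Finsupp.sum_congr fun z _ => by rw [hb]

lemma repr_pathVal (z : SigT Q R) : b.repr (P.pathVal z.1) = Finsupp.single z 1 := by
  rw [← hb, b.repr_self]

lemma repr_iota_mul_pathVal (β : Q.E) (z ζ : SigT Q R) :
    b.repr (P.ι β * P.pathVal z.1) ζ =
      if z.1.1 = Q.t β ∧ ζ.1.2 = β :: z.1.2 then 1 else 0 := by
  obtain ⟨⟨v, w⟩, hzall, hzst⟩ := z
  obtain ⟨⟨u, l⟩, hζall, hζst⟩ := ζ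
  by_cases h1 : v = Q.t β
  · subst h1
    by_cases h2 : ∃ hw : w ≠ [], [β, w.head hw] ∈ R
    · obtain ⟨hw, hrel⟩ := h2
      rw [iota_mul_pathVal_rel P β w hw hrel, map_zero, Finsupp.zero_apply, if_neg]
      rintro ⟨-, hc⟩
      have hal : Q.Allowed R (β :: w) := by
        simp only at hc
        rw [← hc]; exact hζall
      have := (List.isChain_cons.mp hal).1 (w.head hw) (by simp [List.head?_eq_head hw])
      exact this.2 hrel
    · push_neg at h2
      have hstep := allowed_cons (R := R) β w hzall hzst h2
      rw [iota_mul_pathVal_good]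
      have hv : (Q.s β, β :: w) = ((⟨(Q.s β, β :: w), hstep⟩ : SigT Q R)).1 := rfl
      rw [hv, repr_pathVal P b hb, Finsupp.single_apply]
      by_cases hc : l = β :: w
      · rw [if_pos, if_pos ⟨rfl, hc⟩]
        apply Subtype.ext
        refine Prod.ext ?_ hc.symm
        subst hc
        exact hζst (by simp)
      · rw [if_neg, if_neg (fun hcc => hc hcc.2)]
        intro he
        exact hc (congrArg (fun t => t.1.2) he).symm
  · rw [iota_mul_pathVal_of_ne P β (z := (v, w)) h1, map_zero, Finsupp.zero_apply,
      if_neg (fun hc => h1 hc.1)]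

lemma repr_iota_mul (β : Q.E) (a : A) (ζ : SigT Q R) :
    b.repr (P.ι β * a) ζ =
      (b.repr a).sum fun z c =>
        c * (if z.1.1 = Q.t β ∧ ζ.1.2 = β :: z.1.2 then 1 else 0) := by
  conv_lhs => rw [expansion P b hb a]
  rw [Finsupp.mul_sum, map_finsuppSum, Finsupp.sum_apply]
  refine Finsupp.sum_congr fun z _ => ?_
  rw [mul_smul_comm, map_smul, Finsupp.smul_apply, repr_iota_mul_pathVal P b hb,
    smul_eq_mul]

lemma repr_iota_mul_ne (β : Q.E) (a : A) (ζ : SigT Q R)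
    (hζ : ∀ w, ζ.1.2 ≠ β :: w) :
    b.repr (P.ι β * a) ζ = 0 := by
  rw [repr_iota_mul P b hb]
  refine Finset.sum_eq_zero fun z _ => ?_
  dsimp only
  rw [if_neg (fun hc => hζ _ hc.2), mul_zero]

lemma repr_iota_mul_cons (β : Q.E) (w : List Q.E) (a : A) (ζ : SigT Q R)
    (hζ : ζ.1.2 = β :: w) (hall : Q.Allowed R w) (hst : Q.StartsAt (Q.t β) w) :
    b.repr (P.ι β * a) ζ = b.repr a ⟨(Q.t β, w), hall, hst⟩ := by
  rw [repr_iota_mul P b hb]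
  refine Eq.trans (Finset.sum_eq_single (⟨(Q.t β, w), hall, hst⟩ : SigT Q R) ?_ ?_) ?_
  · intro z _ hzne
    dsimp only
    rw [if_neg, mul_zero]
    rintro ⟨hz1, hz2⟩
    apply hzne
    apply Subtype.ext
    refine Prod.ext hz1 ?_
    have := hζ.symm.trans hz2
    exact (List.cons.injEq _ _ _ _).mp this |>.2.symm
  · intro hns
    dsimp only
    rw [Finsupp.notMem_support_iff.mp hns, zero_mul]
  · dsimp only
    rw [if_pos ⟨rfl, by rw [hζ]⟩, mul_one]

lemma repr_e_ne (v : Q.V) (a : A) (ζ : SigT Q R) (ha : P.e v * a = a)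
    (hne : ζ.1.1 ≠ v) : b.repr a ζ = 0 := by
  conv_lhs => rw [← ha, expansion P b hb a]
  rw [Finsupp.mul_sum, map_finsuppSum, Finsupp.sum_apply]
  refine Finset.sum_eq_zero fun z _ => ?_
  dsimp only
  rw [mul_smul_comm, e_mul_pathVal, map_smul, Finsupp.smul_apply]
  by_cases h : v = z.1.1
  · rw [if_pos h, repr_pathVal P b hb, Finsupp.single_apply,
      if_neg (fun he => hne (by rw [← he]; exact h.symm)), smul_zero]
  · rw [if_neg h, map_zero, Finsupp.zero_apply, smul_zero]

end BasisHelpers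

section Degree

variable (P : MonPres Q R k A)

/-- Pointwise version of `InDegree`, convenient for sums. -/
def GoodF (x : Q.V) (n : ℕ) (f : GamT Q R →₀ A) : Prop :=
  ∀ z : GamT Q R, (f z ≠ 0 → z.1.length = n ∧ Q.StartsAt x z.1) ∧
    P.e (endV Q x z.1) * f z = f z

lemma goodF_zero (x : Q.V) (n : ℕ) : GoodF P x n 0 :=
  fun _ => ⟨fun h => absurd rfl h, by simp⟩

lemma goodF_add (x : Q.V) (n : ℕ) {f g : GamT Q R →₀ A}
    (hf : GoodF P x n f) (hg : GoodF P x n g) : GoodF P x n (f + g) := by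
  intro z
  constructor
  · intro hz
    rw [Finsupp.add_apply] at hz
    by_cases h : f z = 0
    · exact (hg z).1 (by rw [h, zero_add] at hz; exact hz)
    · exact (hf z).1 h
  · rw [Finsupp.add_apply, mul_add, (hf z).2, (hg z).2]

lemma goodF_fsum {ι M : Type*} [Zero M] (x : Q.V) (n : ℕ) (t : ι →₀ M)
    (F : ι → M → (GamT Q R →₀ A))
    (h : ∀ i ∈ t.support, GoodF P x n (F i (t i))) : GoodF P x n (t.sum F) :=
  Finset.sum_induction _ _ (fun _ _ ha hb => goodF_add P x n ha hb)
    (goodF_zero P x n) h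

lemma goodF_single (x : Q.V) (n : ℕ) (z : GamT Q R) (a : A)
    (h1 : z.1.length = n ∧ Q.StartsAt x z.1)
    (h2 : P.e (endV Q x z.1) * a = a) : GoodF P x n (Finsupp.single z a) := by
  intro z'
  by_cases hz : z = z'
  · subst hz
    rw [Finsupp.single_eq_same]
    exact ⟨fun _ => h1, h2⟩
  · rw [Finsupp.single_eq_of_ne' hz]
    exact ⟨fun h => absurd rfl h, by simp⟩

lemma indegree_of_goodF {x : Q.V} {n : ℕ} {f : GamT Q R →₀ A}
    (h : GoodF P x n f) : P.InDegree x n f := fun z hz =>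
  ⟨((h z).1 (Finsupp.mem_support_iff.mp hz)).1,
    ((h z).1 (Finsupp.mem_support_iff.mp hz)).2, (h z).2⟩

end Degree

/-- The condition on a pair of a Γ-path `p` and a basis path `z` under which the
contracting construction produces a Γ-path `p ++ [head of z]`. -/
def CondA (Q : Quiv) (R : Set (List Q.E)) (p : List Q.E) (z : SigT Q R) : Prop :=
  p ≠ [] ∧ z.1.2 ≠ [] ∧ ∀ (hp : p ≠ []) (hw : z.1.2 ≠ []),
    z.1.1 = Q.t (p.getLast hp) ∧ [p.getLast hp, z.1.2.head hw] ∈ R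

lemma gammaPath_concat {p : List Q.E} (hp : Q.GammaPath R p) {z : SigT Q R}
    (h : CondA Q R p z) : Q.GammaPath R (p ++ [z.1.2.head h.2.1]) := by
  refine List.isChain_append.mpr ⟨hp, List.isChain_singleton _, ?_⟩
  intro a ha y hy
  obtain ⟨he, hrel⟩ := h.2.2 h.1 h.2.1
  have ha' : a = p.getLast h.1 := by
    rw [List.getLast?_eq_getLast h.1] at ha
    exact (Option.some.inj ha).symm
  have hy' : y = z.1.2.head h.2.1 := by simpa using hy.symm
  subst ha'; subst hy'
  exact ⟨he.symm.trans (z.2.2 h.2.1).symm, hrel⟩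
/-- For a quadratic monomial algebra `A = kQ/I` and a vertex `x`, the
simple module `S_x` admits the projective resolution with `ℓ`-th term
`⊕_{p ∈ Γ^ℓ(x,-)} e_{t(p)}A` and differential sending the generator indexed by
`β₁⋯β_ℓ` to `β_ℓ` in the summand indexed by `β₁⋯β_{ℓ-1}`: this differential squares to
zero, and the resulting complex is exact in positive degrees. -/
theorem simpleResD_complex_and_exact
    (Q : Quiv) (R : Set (List Q.E)) (hR : ∀ l ∈ R, l.length = 2)
    (k A : Type) [Field k] [Ring A] [Algebra k A]
    (P : MonPres Q R k A) (hbasis : P.HasPathBasis)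
    (x : Q.V) :
    P.simpleResD.comp P.simpleResD = 0 ∧
      ∀ n : ℕ, 1 ≤ n →
        ∀ f : {l : List Q.E // Q.GammaPath R l} →₀ A,
          P.InDegree x n f → P.simpleResD f = 0 →
          ∃ g, P.InDegree x (n + 1) g ∧ P.simpleResD g = f := by
  classical
  obtain ⟨b, hb⟩ := hbasis
  refine ⟨simpleResD_comp_self P, ?_⟩
  intro n hn f hf hdf
  -- every index in the support is a nonempty path
  have hne : ∀ p ∈ f.support, p.1 ≠ [] := by
    intro p hp h0
    have hlen := (hf p hp).1
    rw [h0] at hlen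
    simp at hlen
    omega
  -- the key fact: every basis component of every coefficient of `f` satisfies `CondA`
  have main : ∀ p ∈ f.support, ∀ z ∈ (b.repr (f p)).support, CondA Q R p.1 z := by
    intro p hp z hz
    have hpne : p.1 ≠ [] := hne p hp
    have hz1 : z.1.1 = Q.t (p.1.getLast hpne) := by
      by_contra hcon
      have he : P.e (endV Q x p.1) * f p = f p := (hf p hp).2.2
      rw [endV_ne x hpne] at he
      exact Finsupp.mem_support_iff.mp hz (repr_e_ne P b hb _ _ z he hcon)
    by_contra hcon
    have hgood : ∀ hw : z.1.2 ≠ [], [p.1.getLast hpne, z.1.2.head hw] ∉ R := by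
      intro hw hrel
      exact hcon ⟨hpne, hw, fun hp' hw' => ⟨hz1, hrel⟩⟩
    obtain ⟨hall', hst'⟩ :=
      allowed_cons (R := R) (p.1.getLast hpne) z.1.2 z.2.1 (hz1 ▸ z.2.2) hgood
    set ζ : SigT Q R := ⟨(Q.s (p.1.getLast hpne), p.1.getLast hpne :: z.1.2), hall', hst'⟩
      with hζdef
    set q : GamT Q R := ⟨p.1.dropLast, List.IsChain.prefix p.2 p.1.dropLast_prefix⟩
      with hqdef
    have h0 : b.repr ((P.simpleResD f) q) ζ = 0 := by rw [hdf]; simp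
    rw [simpleResD_apply P f, Finsupp.sum_apply, map_finsuppSum, Finsupp.sum_apply] at h0
    have hside : ∀ p' ∈ f.support, p' ≠ p →
        b.repr (((if h : p'.1 = [] then (0 : GamT Q R →₀ A)
          else Finsupp.single
            ⟨p'.1.dropLast, List.IsChain.prefix p'.2 p'.1.dropLast_prefix⟩
            (P.ι (p'.1.getLast h) * f p'))) q) ζ = 0 := by
      intro p' hp' hne'
      rw [dif_neg (hne p' hp'), Finsupp.single_apply]
      by_cases hq : (⟨p'.1.dropLast, List.IsChain.prefix p'.2 p'.1.dropLast_prefix⟩ :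
          GamT Q R) = q
      · rw [if_pos hq]
        apply repr_iota_mul_ne P b hb
        intro w hw
        have hζ2 : ζ.1.2 = p.1.getLast hpne :: z.1.2 := by rw [hζdef]
        rw [hζ2] at hw
        have hβeq : p.1.getLast hpne = p'.1.getLast (hne p' hp') :=
          ((List.cons.injEq _ _ _ _).mp hw).1
        apply hne'
        apply Subtype.ext
        have hdrop : p'.1.dropLast = p.1.dropLast := by
          have := congrArg Subtype.val hq
          rw [hqdef] at this
          exact this
        conv_lhs => rw [← List.dropLast_append_getLast (hne p' hp')]
        conv_rhs => rw [← List.dropLast_append_getLast hpne]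
        rw [hdrop, ← hβeq]
      · rw [if_neg hq, map_zero]
        rfl
    have key := Finset.sum_eq_single_of_mem p hp hside
    have h1 : b.repr (((if h : p.1 = [] then (0 : GamT Q R →₀ A)
        else Finsupp.single
          ⟨p.1.dropLast, List.IsChain.prefix p.2 p.1.dropLast_prefix⟩
          (P.ι (p.1.getLast h) * f p))) q) ζ = 0 := key.symm.trans h0
    rw [dif_neg hpne, ← hqdef, Finsupp.single_eq_same] at h1
    rw [repr_iota_mul_cons P b hb (p.1.getLast hpne) z.1.2 (f p) ζ (by rw [hζdef])
      z.2.1 (hz1 ▸ z.2.2)] at h1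
    refine Finsupp.mem_support_iff.mp hz ?_
    rw [show z = (⟨(Q.t (p.1.getLast hpne), z.1.2), z.2.1, hz1 ▸ z.2.2⟩ : SigT Q R) from
      Subtype.ext (Prod.ext hz1 rfl)]
    exact h1
  -- the contracting element
  refine ⟨f.sum fun p a => (b.repr a).sum fun z c =>
    if h : CondA Q R p.1 z then
      Finsupp.single ⟨p.1 ++ [z.1.2.head h.2.1], gammaPath_concat p.2 h⟩
        (c • P.pathVal (Q.t (z.1.2.head h.2.1), z.1.2.tail))
    else 0, ?_, ?_⟩
  · -- InDegree (n+1)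
    apply indegree_of_goodF P
    apply goodF_fsum
    intro p hp
    apply goodF_fsum
    intro z hzz
    by_cases h : CondA Q R p.1 z
    · rw [dif_pos h]
      apply goodF_single
      · constructor
        · rw [List.length_append, (hf p hp).1]
          simp
        · intro hne'
          rw [List.head_append_of_ne_nil h.1]
          exact (hf p hp).2.1 h.1
      · rw [endV_concat, mul_smul_comm]
        congr 1
        rw [e_mul_pathVal, if_pos rfl]
    · rw [dif_neg h]
      exact goodF_zero P x (n + 1)
  · -- d g = f
    have step : ∀ p ∈ f.support,
        P.simpleResD ((b.repr (f p)).sum fun z c =>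
          if h : CondA Q R p.1 z then
            Finsupp.single ⟨p.1 ++ [z.1.2.head h.2.1], gammaPath_concat p.2 h⟩
              (c • P.pathVal (Q.t (z.1.2.head h.2.1), z.1.2.tail))
          else 0) = Finsupp.single p (f p) := by
      intro p hp
      rw [map_finsuppSum]
      rw [Finsupp.sum_congr (g2 := fun z c => Finsupp.single p (c • P.pathVal z.1))
        (fun z hzz => ?_)]
      · refine Eq.trans (map_finsuppSum (Finsupp.singleAddHom p) _ _).symm ?_
        rw [← expansion P b hb]
        rfl
      · have hcA := main p hp z hzz
        rw [dif_pos hcA, simpleResD_single]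
        rw [dif_neg (by simp : ¬((⟨p.1 ++ [z.1.2.head hcA.2.1],
          gammaPath_concat p.2 hcA⟩ : GamT Q R).1 = []))]
        simp only [getLast_concat'', List.dropLast_concat]
        rw [mul_smul_comm, iota_head_mul_pathVal P z hcA.2.1]
    rw [map_finsuppSum, Finsupp.sum_congr step, Finsupp.sum_single]

end Quiv
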